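/- arXiv:2006.00191 — 2 statements merged into one kernel-verified Lean document; each statement's English description precedes it below -/
import Mathlib

section
/- Let w > 0, a ∈ ℝ, φ ∈ (0,1), k ≥ 2 an integer, and q₁ < ⋯ < q_{k−1} real thresholds. For b ∈ ℝ define I₂(b) := ∑_{l=1}^{k} [ η(φ·p_l(a) + (1−φ)·p_l(b)) − φ·η(p_l(a)) − (1−φ)·η(p_l(b)) ], where p_l(x) = Q(q_{l−1} − w·x) − Q(q_l − w·x) with conventions Q(q₀ − w·x) := 1 and Q(q_k − w·x) := 0. Then I₂(b) converges, as b → ∞, to f_φ(Q(q_{k−1} − w·a)). -/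
open MeasureTheory Real Filter

/-- The standard Gaussian tail function `Q(x) = ∫_x^∞ (2π)^{-1/2} e^{-u²/2} du`. -/
noncomputable def gaussQ (x : ℝ) : ℝ :=
  ∫ u in Set.Ioi x, (Real.sqrt (2 * Real.pi))⁻¹ * Real.exp (-u ^ 2 / 2)

/-- `η(t) = -t log t` (with `η(0) = 0`, automatic since `Real.log 0 = 0`). -/
noncomputable def eta (t : ℝ) : ℝ := -t * Real.log t

/-- The binary entropy function `h(p) = -p log p - (1-p) log (1-p)`. -/
noncomputable def binEnt (p : ℝ) : ℝ := eta p + eta (1 - p)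

/-- `f_φ(p) = h(φ(1-p)) - φ·h(p)`. -/
noncomputable def fphi (φ p : ℝ) : ℝ := binEnt (φ * (1 - p)) - φ * binEnt p

/-- Boundary-extended Gaussian tail for a `k`-point ADC with thresholds `q`. -/
noncomputable def Qb (k : ℕ) (q : ℕ → ℝ) (t : ℝ) (l : ℕ) : ℝ :=
  if l = 0 then 1 else if l = k then 0 else gaussQ (q l - t)

/-- `p_l(x)` with `t = w·x`: `p_l = Q(q_{l-1} - t) - Q(q_l - t)`. -/
noncomputable def adcP (k : ℕ) (q : ℕ → ℝ) (t : ℝ) (l : ℕ) : ℝ :=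
  Qb k q t (l - 1) - Qb k q t l

/-- Binary-input mutual information of the real Gaussian channel with gain `w`
followed by a `k`-point ADC with thresholds `q`, inputs `x₁` w.p. `φ`, `x₂` w.p. `1-φ`. -/
noncomputable def miADC (w : ℝ) (k : ℕ) (q : ℕ → ℝ) (φ x₁ x₂ : ℝ) : ℝ :=
  ∑ l ∈ Finset.Icc 1 k,
    (eta (φ * adcP k q (w * x₁) l + (1 - φ) * adcP k q (w * x₂) l)
      - φ * eta (adcP k q (w * x₁) l) - (1 - φ) * eta (adcP k q (w * x₂) l))

/-! As `b → ∞` the output of input `b` concentrates on the top level `k`, so by continuity of `η`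
the limit is the sum with `p_l(b)` replaced by `δ_{lk}`. For `l < k` that term is
`η(φ p_l) − φ η(p_l) = p_l η(φ)`, and these telescope to `(1 − P) η(φ)` with `P = Q(q_{k−1} − w a)`;
adding the top term `η(φ P + 1 − φ) − φ η(P)` gives `f_φ(P)`, again by `η(xy) = x η(y) + y η(x)`. -/

open ProbabilityTheory Finset

lemma gaussQ_eq_setIntegral_gaussianPDFReal (x : ℝ) :
    gaussQ x = ∫ u in Set.Ioi x, gaussianPDFReal 0 1 u := by
  simp [gaussQ, gaussianPDFReal]

lemma tendsto_gaussQ_atBot : Tendsto gaussQ atBot (nhds 1) := by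
  have h := (aecover_Ioi (μ := volume) tendsto_id).integral_tendsto_of_countably_generated
    (integrable_gaussianPDFReal 0 1)
  rw [integral_gaussianPDFReal_eq_one 0 one_ne_zero] at h
  simpa only [id, ← gaussQ_eq_setIntegral_gaussianPDFReal] using h

lemma tendsto_Qb_atTop {k m : ℕ} (q : ℕ → ℝ) (hm : m < k) :
    Tendsto (fun t => Qb k q t m) atTop (nhds 1) := by
  rcases eq_or_ne m 0 with rfl | hm0
  · simp [Qb]
  · simp only [Qb, if_neg hm0, if_neg hm.ne]
    exact tendsto_gaussQ_atBot.comp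
      (tendsto_atBot_add_const_left atTop (q m) tendsto_neg_atTop_atBot)

lemma tendsto_adcP_atTop {k l : ℕ} (q : ℕ → ℝ) (hl : l ∈ Icc 1 k) :
    Tendsto (fun t => adcP k q t l) atTop (nhds (if l = k then 1 else 0)) := by
  rw [mem_Icc] at hl
  have hpred := tendsto_Qb_atTop q (show l - 1 < k by omega)
  split_ifs with hlk
  · subst hlk
    have hQb_top : ∀ t, Qb l q t l = 0 := fun t => by simp [Qb, show l ≠ 0 by omega]
    simpa only [adcP, hQb_top, sub_zero] using hpred
  · simpa only [adcP, sub_self] using hpred.sub (tendsto_Qb_atTop q (lt_of_le_of_ne hl.2 hlk))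

lemma sum_Icc_adcP (k n : ℕ) (q : ℕ → ℝ) (t : ℝ) :
    ∑ l ∈ Icc 1 n, adcP k q t l = 1 - Qb k q t n := by
  induction n with
  | zero => simp [Qb]
  | succ n ih =>
    rw [sum_Icc_succ_top (by omega), ih, adcP, Nat.add_sub_cancel]
    ring

lemma eta_eq_negMulLog : eta = negMulLog := rfl

noncomputable def mixInfo (φ x y : ℝ) : ℝ :=
  eta (φ * x + (1 - φ) * y) - φ * eta x - (1 - φ) * eta y

lemma continuous_mixInfo (φ x : ℝ) : Continuous (mixInfo φ x) := by
  unfold mixInfo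
  rw [eta_eq_negMulLog]
  fun_prop

lemma mixInfo_zero (φ x : ℝ) : mixInfo φ x 0 = x * eta φ := by
  simp [mixInfo, eta_eq_negMulLog, negMulLog_mul]

lemma fphi_eq_mixInfo_one (φ p : ℝ) : fphi φ p = (1 - p) * eta φ + mixInfo φ p 1 := by
  have h_compl : 1 - φ * (1 - p) = φ * p + (1 - φ) * 1 := by ring
  simp only [fphi, binEnt, mixInfo, h_compl, eta_eq_negMulLog, negMulLog_mul, negMulLog_one]
  ring

lemma tendsto_miADC_atTop {w : ℝ} (hw : 0 < w) (k : ℕ) (q : ℕ → ℝ) (φ a : ℝ) :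
    Tendsto (fun b => miADC w k q φ a b) atTop
      (nhds (∑ l ∈ Icc 1 k, mixInfo φ (adcP k q (w * a) l) (if l = k then 1 else 0))) :=
  tendsto_finsetSum _ fun _ hl => ((continuous_mixInfo φ _).tendsto _).comp
    ((tendsto_adcP_atTop q hl).comp (tendsto_id.const_mul_atTop hw))

lemma sum_mixInfo_adcP_ite_eq_fphi (φ : ℝ) (n : ℕ) (q : ℕ → ℝ) (t : ℝ) :
    ∑ l ∈ Icc 1 (n + 1), mixInfo φ (adcP (n + 1) q t l) (if l = n + 1 then 1 else 0)
      = fphi φ (Qb (n + 1) q t n) := by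
  have h_low : ∀ l ∈ Icc 1 n,
      mixInfo φ (adcP (n + 1) q t l) (if l = n + 1 then 1 else 0) = adcP (n + 1) q t l * eta φ :=
    fun l hl => by rw [if_neg (by grind), mixInfo_zero]
  rw [sum_Icc_succ_top (by omega), if_pos rfl, sum_congr rfl h_low, ← sum_mul, sum_Icc_adcP,
    fphi_eq_mixInfo_one]
  simp [adcP, Qb]

theorem miADC_tendsto_general (w a φ : ℝ) (hw : 0 < w)
    (k : ℕ) (hk : 2 ≤ k) (q : ℕ → ℝ) :
    Tendsto (fun b : ℝ => miADC w k q φ a b) atTop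
      (nhds (fphi φ (gaussQ (q (k - 1) - w * a)))) := by
  obtain ⟨n, rfl⟩ : ∃ n, k = n + 1 := ⟨k - 1, by omega⟩
  have hQb : Qb (n + 1) q (w * a) n = gaussQ (q n - w * a) := by simp [Qb, show n ≠ 0 by omega]
  rw [Nat.add_sub_cancel, ← hQb, ← sum_mixInfo_adcP_ite_eq_fphi]
  exact tendsto_miADC_atTop hw _ q φ a

/-- As `b → ∞`, the `k`-point-ADC binary-input mutual information `I₂(b)` with inputs
`a` (w.p. `φ`) and `b` (w.p. `1-φ`) converges to `f_φ(Q(q_{k-1} - w·a))`. -/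
theorem miADC_tendsto (w a φ : ℝ) (hw : 0 < w) (hφ : φ ∈ Set.Ioo (0 : ℝ) 1)
    (k : ℕ) (hk : 2 ≤ k) (q : ℕ → ℝ)
    (hq : ∀ l : ℕ, 1 ≤ l → l + 1 ≤ k - 1 → q l < q (l + 1)) :
    Tendsto (fun b : ℝ => miADC w k q φ a b) atTop
      (nhds (fphi φ (gaussQ (q (k - 1) - w * a)))) :=
  miADC_tendsto_general w a φ hw k hk q
end

section
/- Let w₁, w₂ be nonzero reals with |w₁| < |w₂| and let J > 0. Suppose μ* is a Borel probability measure on ℝ with ∫ x² dμ*(x) ≤ J such that R_s(μ*) ≥ R_s(μ) for every Borel probability measure μ on ℝ with ∫ x² dμ(x) ≤ J. Then μ*((−∞,0)) = 0 or μ*((0,∞)) = 0, i.e. the support of μ* is contained in [0,∞) or in (−∞,0]. (Theorem 2, case |w₁| < |w₂|.) -/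
open MeasureTheory Real Filter

/-- `I(μ, w) = h(∫ Q(w·x) dμ) - ∫ h(Q(w·x)) dμ`, the mutual information of the real
Gaussian channel `Y = sgn(w·X + N)`, `N ~ N(0,1)`, with a one-bit ADC and input `X ~ μ`. -/
noncomputable def miMeas (μ : Measure ℝ) (w : ℝ) : ℝ :=
  binEnt (∫ x, gaussQ (w * x) ∂μ) - ∫ x, binEnt (gaussQ (w * x)) ∂μ

/-- The Wyner secrecy rate `R_s(μ) = I(μ, w₁) - I(μ, w₂)`. -/
noncomputable def wynerRs (w₁ w₂ : ℝ) (μ : Measure ℝ) : ℝ := miMeas μ w₁ - miMeas μ w₂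

open ProbabilityTheory Set

/-! If `μ*` charged both half-lines, the folded input `|X|` would satisfy the same power
constraint and have a strictly larger secrecy rate. Since `Q(-y) = 1 - Q(y)` and `h(1 - p) = h(p)`,
folding leaves each `∫ h(Q(w x)) dμ` unchanged and only replaces `qᵢ = ∫ Q(|wᵢ| x) dμ` by
`pᵢ = ∫ Q(|wᵢ| |x|) dμ`. Pointwise comparisons give `p₂ < p₁ < q₁ ≤ 1 - p₁` and
`p₂ - p₁ ≤ q₂ - q₁ < p₁ - p₂`; after reflecting the `qᵢ` into `[0, 1/2]`, where `h` is increasing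
and strictly concave, this forces `h q₁ - h p₁ < h q₂ - h p₂`, i.e. folding gains. -/

theorem StrictConcaveOn.map_add_sub_map_lt {s : Set ℝ} {f : ℝ → ℝ} (hf : StrictConcaveOn ℝ s f)
    {x y δ : ℝ} (hx : x ∈ s) (hy : y ∈ s) (hxδ : x + δ ∈ s) (hyδ : y + δ ∈ s) (hxy : x < y)
    (hδ : 0 < δ) : f (y + δ) - f y < f (x + δ) - f x := by
  have h₁ := hf.secant_strict_mono hx hxδ hyδ (by linarith) (by linarith) (by linarith)
  have h₂ := hf.secant_strict_mono hyδ hx hy (by linarith) (by linarith) hxy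
  have e₁ : (f y - f (y + δ)) / (y - (y + δ)) = (f (y + δ) - f y) / δ := by
    rw [← neg_div_neg_eq, neg_sub, neg_sub, add_sub_cancel_left]
  have e₂ : (f x - f (y + δ)) / (x - (y + δ)) = (f (y + δ) - f x) / (y + δ - x) := by
    rw [← neg_div_neg_eq, neg_sub, neg_sub]
  rw [add_sub_cancel_left] at h₁
  rw [e₁, e₂] at h₂
  exact (div_lt_div_iff_of_pos_right hδ).1 (h₂.trans h₁)

theorem binEntropy_min_one_sub (q : ℝ) : binEntropy (min q (1 - q)) = binEntropy q := by
  rcases min_choice q (1 - q) with h | h <;> simp [h]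

theorem binEntropy_sub_lt_binEntropy_sub {p₁ p₂ q₁ q₂ : ℝ} (hp₂ : 0 ≤ p₂) (hp : p₂ < p₁)
    (hpq₁ : p₁ < q₁) (hq₁ : q₁ + p₁ ≤ 1) (hcross : q₁ + p₂ ≤ q₂ + p₁)
    (hsum : q₂ + p₂ < q₁ + p₁) :
    binEntropy q₁ - binEntropy p₁ < binEntropy q₂ - binEntropy p₂ := by
  rw [← binEntropy_min_one_sub q₁, ← binEntropy_min_one_sub q₂]
  set r₁ := min q₁ (1 - q₁)
  set r₂ := min q₂ (1 - q₂)
  have hr₁ : p₁ ≤ r₁ := le_min (by linarith) (by linarith)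
  have hr₁' : r₁ ≤ 2⁻¹ := by linarith [min_le_left q₁ (1 - q₁), min_le_right q₁ (1 - q₁)]
  have hr₂ : p₂ < r₂ := lt_min (by linarith) (by linarith)
  have hr₂' : r₂ ≤ 2⁻¹ := by linarith [min_le_left q₂ (1 - q₂), min_le_right q₂ (1 - q₂)]
  -- compare the increments of `h` over `[p₂, p₁]` and over its translate `[s, r₁]`
  set s := r₁ - (p₁ - p₂)
  have hsr₂ : s ≤ r₂ := le_min (by linarith [min_le_left q₁ (1 - q₁)])
    (by linarith [min_le_right q₁ (1 - q₁)])
  rcases (show p₂ ≤ s by linarith).eq_or_lt with hs | hs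
  · have : binEntropy p₂ < binEntropy r₂ :=
      binEntropy_strictMonoOn ⟨hp₂, by linarith⟩ ⟨by linarith, hr₂'⟩ hr₂
    rw [show r₁ = p₁ by linarith]
    linarith
  · have hmono : binEntropy s ≤ binEntropy r₂ :=
      binEntropy_strictMonoOn.monotoneOn ⟨by linarith, by linarith⟩ ⟨by linarith, hr₂'⟩ hsr₂
    have hconc := strictConcave_binEntropy.map_add_sub_map_lt (x := p₂) (y := s) (δ := p₁ - p₂)
      ⟨hp₂, by linarith⟩ ⟨by linarith, by linarith⟩ ⟨by linarith, by linarith⟩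
      ⟨by linarith, by linarith⟩ hs (by linarith)
    rw [show s + (p₁ - p₂) = r₁ by ring, add_sub_cancel] at hconc
    linarith

theorem gaussQ_eq_integral_gaussianPDFReal (x : ℝ) :
    gaussQ x = ∫ u in Ioi x, gaussianPDFReal 0 1 u := by
  simp [gaussQ, gaussianPDFReal]

theorem gaussQ_nonneg (x : ℝ) : 0 ≤ gaussQ x := by
  rw [gaussQ_eq_integral_gaussianPDFReal]
  exact setIntegral_nonneg measurableSet_Ioi fun u _ ↦ gaussianPDFReal_nonneg 0 1 u

theorem gaussQ_strictAnti : StrictAnti gaussQ := by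
  intro x y hxy
  have hφ := integrable_gaussianPDFReal 0 1
  simp only [gaussQ_eq_integral_gaussianPDFReal]
  rw [← Ioc_union_Ioi_eq_Ioi hxy.le, setIntegral_union (Ioc_disjoint_Ioi le_rfl) measurableSet_Ioi
    hφ.integrableOn hφ.integrableOn, lt_add_iff_pos_left,
    setIntegral_pos_iff_support_of_nonneg_ae (ae_of_all _ (gaussianPDFReal_nonneg 0 1))
      hφ.integrableOn]
  have hφ₀ : ∀ u, gaussianPDFReal 0 1 u ≠ 0 := fun u ↦ (gaussianPDFReal_pos 0 1 u one_ne_zero).ne'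
  simp [Function.support, hφ₀, hxy]

theorem measurable_gaussQ : Measurable gaussQ := gaussQ_strictAnti.antitone.measurable

theorem gaussQ_neg (x : ℝ) : gaussQ (-x) = 1 - gaussQ x := by
  have hφ := integrable_gaussianPDFReal 0 1
  have hsymm : ∀ u, gaussianPDFReal 0 1 (-u) = gaussianPDFReal 0 1 u := by
    simp [gaussianPDFReal]
  have htail : gaussQ (-x) = ∫ u in Iic x, gaussianPDFReal 0 1 u := by
    rw [gaussQ_eq_integral_gaussianPDFReal, ← integral_comp_neg_Iic]
    simp [hsymm]
  rw [htail, gaussQ_eq_integral_gaussianPDFReal, ← integral_gaussianPDFReal_eq_one 0 one_ne_zero,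
    ← intervalIntegral.integral_Iic_add_Ioi hφ.integrableOn hφ.integrableOn, add_sub_cancel_right]

theorem gaussQ_zero : gaussQ 0 = 2⁻¹ := by
  have := gaussQ_neg 0
  rw [neg_zero] at this
  linarith

theorem gaussQ_le_one (x : ℝ) : gaussQ x ≤ 1 := by
  have := gaussQ_neg (-x)
  rw [neg_neg] at this
  linarith [gaussQ_nonneg (-x)]

theorem gaussQ_le_half {x : ℝ} (hx : 0 ≤ x) : gaussQ x ≤ 2⁻¹ :=
  gaussQ_zero ▸ gaussQ_strictAnti.antitone hx

theorem gaussQ_lt_half {x : ℝ} (hx : 0 < x) : gaussQ x < 2⁻¹ :=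
  gaussQ_zero ▸ gaussQ_strictAnti hx

theorem Measurable.integrable_gaussQ_comp {α : Type*} [MeasurableSpace α] {μ : Measure α}
    [IsFiniteMeasure μ] {f : α → ℝ} (hf : Measurable f) : Integrable (fun x ↦ gaussQ (f x)) μ :=
  .of_bound (measurable_gaussQ.comp hf).aestronglyMeasurable 1 <| ae_of_all _ fun x ↦ by
    rw [Real.norm_of_nonneg (gaussQ_nonneg _)]
    exact gaussQ_le_one _

theorem binEnt_eq_binEntropy : binEnt = binEntropy := by
  ext p
  simp only [binEnt, eta, binEntropy_eq_negMulLog_add_negMulLog_one_sub, negMulLog, neg_mul]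

theorem integral_lt_integral_of_le_of_lt_on {α : Type*} [MeasurableSpace α] {μ : Measure α}
    {f g : α → ℝ} {s : Set α} (hf : Integrable f μ) (hg : Integrable g μ) (hle : ∀ x, f x ≤ g x)
    (hlt : ∀ x ∈ s, f x < g x) (hs : μ s ≠ 0) : ∫ x, f x ∂μ < ∫ x, g x ∂μ := by
  rw [← sub_pos, ← integral_sub hg hf,
    integral_pos_iff_support_of_nonneg (fun x ↦ sub_nonneg.2 (hle x)) (hg.sub hf)]
  exact hs.bot_lt.trans_le (measure_mono fun x hx ↦ sub_ne_zero.2 (hlt x hx).ne')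

section Channel

variable {μ : Measure ℝ}

theorem miMeas_neg [IsProbabilityMeasure μ] (w : ℝ) : miMeas μ (-w) = miMeas μ w := by
  have hQ : ∀ x, gaussQ (-w * x) = 1 - gaussQ (w * x) := fun x ↦ by rw [neg_mul, gaussQ_neg]
  simp only [miMeas, hQ, binEnt_eq_binEntropy, binEntropy_one_sub]
  rw [integral_sub (integrable_const 1) (measurable_const_mul w).integrable_gaussQ_comp]
  simp

theorem miMeas_abs [IsProbabilityMeasure μ] (w : ℝ) : miMeas μ |w| = miMeas μ w := by
  rcases abs_choice w with h | h <;> simp [h, miMeas_neg]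

theorem wynerRs_abs [IsProbabilityMeasure μ] (w₁ w₂ : ℝ) :
    wynerRs |w₁| |w₂| μ = wynerRs w₁ w₂ μ := by
  simp only [wynerRs, miMeas_abs]

theorem binEnt_gaussQ_mul_abs (w x : ℝ) : binEnt (gaussQ (w * |x|)) = binEnt (gaussQ (w * x)) := by
  rcases abs_choice x with h | h
  · rw [h]
  · rw [h, mul_neg, gaussQ_neg, binEnt_eq_binEntropy, binEntropy_one_sub]

theorem miMeas_map_abs (w : ℝ) :
    miMeas (μ.map fun x ↦ |x|) w =
      binEnt (∫ x, gaussQ (w * |x|) ∂μ) - ∫ x, binEnt (gaussQ (w * x)) ∂μ := by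
  have hQ : Measurable fun x ↦ gaussQ (w * x) := measurable_gaussQ.comp (measurable_const_mul w)
  rw [miMeas, integral_map measurable_abs.aemeasurable hQ.aestronglyMeasurable,
    integral_map measurable_abs.aemeasurable
      (binEnt_eq_binEntropy ▸ binEntropy_continuous.measurable.comp hQ).aestronglyMeasurable]
  simp only [binEnt_gaussQ_mul_abs]

end Channel

section Fold

variable {μ : Measure ℝ} [IsProbabilityMeasure μ]

theorem integrable_gaussQ_mul (v : ℝ) : Integrable (fun x ↦ gaussQ (v * x)) μ :=
  (measurable_const_mul v).integrable_gaussQ_comp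

theorem integrable_gaussQ_mul_abs (v : ℝ) : Integrable (fun x ↦ gaussQ (v * |x|)) μ :=
  (measurable_abs.const_mul v).integrable_gaussQ_comp

theorem gaussQ_mul_of_neg (v : ℝ) {x : ℝ} (hx : x < 0) : gaussQ (v * x) = 1 - gaussQ (v * |x|) := by
  rw [abs_of_neg hx, mul_neg, gaussQ_neg, sub_sub_cancel]

theorem gaussQ_mul_eq_or_eq_one_sub (x : ℝ) : (∀ v, gaussQ (v * x) = gaussQ (v * |x|)) ∨
    x < 0 ∧ ∀ v, gaussQ (v * x) = 1 - gaussQ (v * |x|) :=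
  (le_or_gt 0 x).imp (fun hx _ ↦ by rw [abs_of_nonneg hx]) fun hx ↦ ⟨hx, (gaussQ_mul_of_neg · hx)⟩

theorem integral_gaussQ_mul_abs_lt {v : ℝ} (hv : 0 < v) (hneg : μ (Iio 0) ≠ 0) :
    ∫ x, gaussQ (v * |x|) ∂μ < ∫ x, gaussQ (v * x) ∂μ := by
  refine integral_lt_integral_of_le_of_lt_on (integrable_gaussQ_mul_abs v) (integrable_gaussQ_mul v)
    (fun x ↦ ?_) (fun x hx ↦ ?_) hneg
  · rcases gaussQ_mul_eq_or_eq_one_sub x with h | ⟨_, h⟩ <;>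
      linarith [h v, gaussQ_le_half (by positivity : 0 ≤ v * |x|)]
  · rw [gaussQ_mul_of_neg v hx]
    linarith [gaussQ_lt_half (mul_pos hv (abs_pos.2 (ne_of_lt hx)))]

theorem integral_gaussQ_mul_add_integral_gaussQ_mul_abs_le_one {v : ℝ} (hv : 0 ≤ v) :
    ∫ x, gaussQ (v * x) ∂μ + ∫ x, gaussQ (v * |x|) ∂μ ≤ 1 := by
  rw [← integral_add (integrable_gaussQ_mul v) (integrable_gaussQ_mul_abs v)]
  calc ∫ x, gaussQ (v * x) + gaussQ (v * |x|) ∂μ ≤ ∫ _, (1 : ℝ) ∂μ :=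
        integral_mono ((integrable_gaussQ_mul v).add (integrable_gaussQ_mul_abs v))
          (integrable_const 1) fun x ↦ by
          rcases gaussQ_mul_eq_or_eq_one_sub x with h | ⟨_, h⟩ <;>
            linarith [h v, gaussQ_le_half (by positivity : 0 ≤ v * |x|)]
    _ = 1 := by simp

theorem wynerRs_lt_wynerRs_map_abs {v₁ v₂ : ℝ} (hv₁ : 0 < v₁) (hv : v₁ < v₂)
    (hneg : μ (Iio 0) ≠ 0) (hpos : μ (Ioi 0) ≠ 0) :
    wynerRs v₁ v₂ μ < wynerRs v₁ v₂ (μ.map fun x ↦ |x|) := by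
  have hI := integrable_gaussQ_mul (μ := μ)
  have hIa := integrable_gaussQ_mul_abs (μ := μ)
  have hanti : ∀ x, gaussQ (v₂ * |x|) ≤ gaussQ (v₁ * |x|) :=
    fun x ↦ gaussQ_strictAnti.antitone (by gcongr)
  have hanti' : ∀ x ∈ Ioi (0 : ℝ), gaussQ (v₂ * |x|) < gaussQ (v₁ * |x|) :=
    fun x hx ↦ gaussQ_strictAnti (mul_lt_mul_of_pos_right hv (abs_pos.2 (ne_of_gt hx)))
  suffices key : binEntropy (∫ x, gaussQ (v₁ * x) ∂μ) - binEntropy (∫ x, gaussQ (v₁ * |x|) ∂μ) <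
      binEntropy (∫ x, gaussQ (v₂ * x) ∂μ) - binEntropy (∫ x, gaussQ (v₂ * |x|) ∂μ) by
    rw [wynerRs, wynerRs, miMeas_map_abs, miMeas_map_abs]
    simp only [miMeas, binEnt_eq_binEntropy]
    linarith
  refine binEntropy_sub_lt_binEntropy_sub (integral_nonneg fun x ↦ gaussQ_nonneg _)
    (integral_lt_integral_of_le_of_lt_on (hIa v₂) (hIa v₁) hanti hanti' hpos)
    (integral_gaussQ_mul_abs_lt hv₁ hneg)
    (integral_gaussQ_mul_add_integral_gaussQ_mul_abs_le_one hv₁.le) ?cross ?sum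
  case cross =>
    rw [← integral_add (hI v₁) (hIa v₂), ← integral_add (hI v₂) (hIa v₁)]
    exact integral_mono ((hI v₁).add (hIa v₂)) ((hI v₂).add (hIa v₁)) fun x ↦ by
      rcases gaussQ_mul_eq_or_eq_one_sub x with h | ⟨_, h⟩ <;> linarith [h v₁, h v₂, hanti x]
  case sum =>
    rw [← integral_add (hI v₂) (hIa v₂), ← integral_add (hI v₁) (hIa v₁)]
    refine integral_lt_integral_of_le_of_lt_on ((hI v₂).add (hIa v₂)) ((hI v₁).add (hIa v₁))
      (fun x ↦ ?_) (fun x (hx : 0 < x) ↦ ?_) hpos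
    · rcases gaussQ_mul_eq_or_eq_one_sub x with h | ⟨_, h⟩ <;> linarith [h v₁, h v₂, hanti x]
    · rcases gaussQ_mul_eq_or_eq_one_sub x with h | ⟨_, h⟩ <;> linarith [h v₁, h v₂, hanti' x hx]

end Fold

theorem optimal_support_lt_general (w₁ w₂ : ℝ) (hw₁ : w₁ ≠ 0)
    (hlt : |w₁| < |w₂|) (J : ℝ)
    (μs : Measure ℝ) [IsProbabilityMeasure μs]
    (hint : Integrable (fun x : ℝ => x ^ 2) μs)
    (hpow : (∫ x, x ^ 2 ∂μs) ≤ J)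
    (hopt : ∀ μ : Measure ℝ, IsProbabilityMeasure μ →
      Integrable (fun x : ℝ => x ^ 2) μ → (∫ x, x ^ 2 ∂μ) ≤ J →
      wynerRs w₁ w₂ μ ≤ wynerRs w₁ w₂ μs) :
    μs (Set.Iio 0) = 0 ∨ μs (Set.Ioi 0) = 0 := by
  by_contra! h
  have hν : IsProbabilityMeasure (μs.map fun x ↦ |x|) :=
    Measure.isProbabilityMeasure_map measurable_abs.aemeasurable
  have hfold := hopt (μs.map fun x ↦ |x|) hν
    (by
      rw [integrable_map_measure (by fun_prop) measurable_abs.aemeasurable]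
      simpa only [Function.comp_def, sq_abs] using hint)
    (by
      rw [integral_map measurable_abs.aemeasurable (by fun_prop)]
      simpa only [sq_abs] using hpow)
  rw [← wynerRs_abs, ← wynerRs_abs (μ := μs)] at hfold
  exact hfold.not_gt (wynerRs_lt_wynerRs_map_abs (abs_pos.2 hw₁) hlt h.1 h.2)

/-- Theorem 2, case `|w₁| < |w₂|`: any maximizer `μ*` of the Wyner secrecy rate under
the power constraint `∫ x² dμ ≤ J` has support contained in `[0,∞)` or in `(-∞,0]`. -/
theorem optimal_support_lt (w₁ w₂ : ℝ) (hw₁ : w₁ ≠ 0) (hw₂ : w₂ ≠ 0)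
    (hlt : |w₁| < |w₂|) (J : ℝ) (hJ : 0 < J)
    (μs : Measure ℝ) [IsProbabilityMeasure μs]
    (hint : Integrable (fun x : ℝ => x ^ 2) μs)
    (hpow : (∫ x, x ^ 2 ∂μs) ≤ J)
    (hopt : ∀ μ : Measure ℝ, IsProbabilityMeasure μ →
      Integrable (fun x : ℝ => x ^ 2) μ → (∫ x, x ^ 2 ∂μ) ≤ J →
      wynerRs w₁ w₂ μ ≤ wynerRs w₁ w₂ μs) :
    μs (Set.Iio 0) = 0 ∨ μs (Set.Ioi 0) = 0 :=
  optimal_support_lt_general w₁ w₂ hw₁ hlt J μs hint hpow hopt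
end
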